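/- Let μ be the probability measure on (0,1) with density ψ̂(x) = (1/(2π))√((1-x)/x)·h(x), h a polynomial positive on [0,∞), and let V be a polynomial such that (d/dx)[2∫log|x−y|dμ(y) − V(x)] = −Re((x−1)₊^{1/2} x₊^{-1/2} h(x)) for x > 0. Then the function x ↦ 2∫log|x−y|dμ(y) − V(x) is constant on [0,1] and strictly decreasing on (1,∞); in particular there is ℓ ∈ ℝ with 2∫log|x−y|dμ(y) − V(x) − ℓ = 0 on [0,1] and < 0 on (1,∞). -/

import Mathlib

/-!
The substitution `y = t ^ 2` carries `ψ(y) dy` on `(0, 1)` to the even measure on `[-1, 1]` with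
density `π⁻¹ √(1 - t²) h(t²)`, which is continuous with compact support. Since
`log |s² - t²| = log |s - t| + log |s + t|`, evenness turns the logarithmic potential of `ψ` at `s²`
into the convolution of `log |·|` with this density at `s`. Such a convolution is continuous, so `G`
is continuous on `[0, ∞)`, including the endpoint `0` where `ψ` is unbounded. For `x > 0` the real
part in `G'` equals `√((x - 1) / x) h(x)`, which vanishes on `(0, 1]` and is positive on `(1, ∞)`;
the mean value theorem does the rest.
-/

open MeasureTheory Real Set Filter Topology Polynomial

lemma locallyIntegrable_log_abs : LocallyIntegrable (fun u : ℝ => log |u|) := by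
  simp only [log_abs]
  refine locallyIntegrable_iff.2 fun k hk => ?_
  obtain ⟨r, hr0, hr⟩ := hk.isBounded.subset_closedBall_lt 0 0
  rw [closedBall_eq_Icc, zero_sub, zero_add] at hr
  exact ((intervalIntegrable_iff_integrableOn_Icc_of_le (by linarith)).1
    intervalIntegral.intervalIntegrable_log').mono_set hr

lemma HasCompactSupport.continuous_integral_log_abs_sub_mul {φ : ℝ → ℝ}
    (hsupp : HasCompactSupport φ) (hφ : Continuous φ) :
    Continuous fun s => ∫ t, log |s - t| * φ t := by
  have := hsupp.continuous_convolution_right (ContinuousLinearMap.mul ℝ ℝ)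
    locallyIntegrable_log_abs hφ
  convert this using 2 with s
  rw [convolution_mul_swap]

-- Also for `a < 0`, where both sides vanish (`√a = 0` there).
lemma re_ofReal_cpow_half (a : ℝ) : ((a : ℂ) ^ ((1 : ℂ) / 2)).re = √a := by
  rw [one_div, Complex.cpow_inv_two_re, Complex.norm_real, Real.norm_eq_abs, Complex.ofReal_re]
  rcases le_total 0 a with ha | ha
  · rw [abs_of_nonneg ha, add_self_div_two]
  · rw [abs_of_nonpos ha, neg_add_cancel, zero_div, sqrt_zero, sqrt_eq_zero'.2 ha]

lemma re_sub_one_cpow_half_mul_cpow_neg_half {x : ℝ} (hx : 0 ≤ x) (c : ℝ) :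
    (((x : ℂ) - 1) ^ ((1 : ℂ) / 2) * (x : ℂ) ^ (-((1 : ℂ) / 2)) * (c : ℂ)).re
      = √((x - 1) / x) * c := by
  have hx' : (x : ℂ) ^ (-((1 : ℂ) / 2)) = ((x ^ (-(1 / 2) : ℝ) : ℝ) : ℂ) := by
    rw [Complex.ofReal_cpow hx]; push_cast; ring_nf
  have hx1 : (x : ℂ) - 1 = ((x - 1 : ℝ) : ℂ) := by push_cast; ring
  rw [hx', hx1, Complex.re_mul_ofReal, Complex.re_mul_ofReal, re_ofReal_cpow_half,
    sqrt_div' _ hx, rpow_neg hx, ← sqrt_eq_rpow, div_eq_mul_inv]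

lemma integral_log_abs_sq_sub_sq_mul {φ : ℝ → ℝ} (hφ : Continuous φ) (heven : ∀ t, φ (-t) = φ t)
    (s : ℝ) :
    ∫ t in (0 : ℝ)..1, log |s ^ 2 - t ^ 2| * φ t = ∫ t in (-1 : ℝ)..1, log |s - t| * φ t := by
  have hint : ∀ a b : ℝ, IntervalIntegrable (fun t => log |s - t| * φ t) volume a b := by
    intro a b
    have := (intervalIntegral.intervalIntegrable_log' (a := s - a) (b := s - b)).comp_sub_left s
    simp only [sub_sub_cancel] at this
    simpa only [log_abs] using this.mul_continuousOn hφ.continuousOn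
  have hsplit : ∀ᵐ t, t ∉ ({s, -s} : Set ℝ) :=
    measure_eq_zero_iff_ae_notMem.1 ((toFinite _).measure_zero _)
  calc ∫ t in (0 : ℝ)..1, log |s ^ 2 - t ^ 2| * φ t
      = ∫ t in (0 : ℝ)..1, (log |s - t| * φ t + log |s - -t| * φ (-t)) := by
        refine intervalIntegral.integral_congr_ae (hsplit.mono fun t ht _ => ?_)
        simp only [mem_insert_iff, mem_singleton_iff, not_or] at ht
        have h1 : |s - t| ≠ 0 := abs_ne_zero.2 (sub_ne_zero.2 (Ne.symm ht.1))
        have h2 : |s - -t| ≠ 0 := abs_ne_zero.2 (sub_ne_zero.2 fun e => ht.2 (by linarith))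
        rw [heven, show s ^ 2 - t ^ 2 = (s - t) * (s - -t) by ring, abs_mul, log_mul h1 h2]
        ring
    _ = (∫ t in (0 : ℝ)..1, log |s - t| * φ t) + ∫ t in (-1 : ℝ)..0, log |s - t| * φ t := by
        have hrefl := (IntervalIntegrable.iff_comp_neg enorm_ne_top).1 (hint 0 (-1))
        simp only [neg_zero, neg_neg] at hrefl
        rw [intervalIntegral.integral_add (hint 0 1) hrefl,
          intervalIntegral.integral_comp_neg (fun t => log |s - t| * φ t), neg_zero]
    _ = ∫ t in (-1 : ℝ)..1, log |s - t| * φ t := by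
        rw [add_comm, intervalIntegral.integral_add_adjacent_intervals (hint _ _) (hint _ _)]

noncomputable def symmDensity (h : ℝ[X]) (t : ℝ) : ℝ := π⁻¹ * √(1 - t ^ 2) * h.eval (t ^ 2)

section symmDensity

variable (h : ℝ[X])

lemma continuous_symmDensity : Continuous (symmDensity h) := by
  unfold symmDensity; fun_prop

lemma symmDensity_neg (t : ℝ) : symmDensity h (-t) = symmDensity h t := by
  simp [symmDensity]

lemma support_symmDensity_subset : Function.support (symmDensity h) ⊆ Ioo (-1) 1 := by
  intro t ht
  by_contra hout
  rw [mem_Ioo, not_and_or, not_lt, not_lt] at hout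
  have : 1 - t ^ 2 ≤ 0 := by rcases hout with h1 | h1 <;> nlinarith
  exact ht (by simp [symmDensity, sqrt_eq_zero'.2 this])

lemma hasCompactSupport_symmDensity : HasCompactSupport (symmDensity h) :=
  HasCompactSupport.intro isCompact_Icc fun _ ht =>
    Function.notMem_support.1 fun h' => ht (Ioo_subset_Icc_self (support_symmDensity_subset h h'))

lemma integral_log_abs_sq_sub_mul_density (s : ℝ) :
    ∫ y in (0 : ℝ)..1, log |s ^ 2 - y| * (1 / (2 * π) * √((1 - y) / y) * h.eval y)
      = ∫ t, log |s - t| * symmDensity h t := by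
  calc ∫ y in (0 : ℝ)..1, log |s ^ 2 - y| * (1 / (2 * π) * √((1 - y) / y) * h.eval y)
      = ∫ t in (0 : ℝ)..1,
          log |s ^ 2 - t ^ 2| * (1 / (2 * π) * √((1 - t ^ 2) / t ^ 2) * h.eval (t ^ 2))
            * (2 * t) := by
        have := intervalIntegral.integral_comp_mul_deriv_of_deriv_nonneg (a := 0) (b := 1)
          (f := fun t => t ^ 2) (f' := fun t => 2 * t)
          (g := fun y => log |s ^ 2 - y| * (1 / (2 * π) * √((1 - y) / y) * h.eval y))
          (by fun_prop) (fun t _ => by simpa using hasDerivAt_pow 2 t)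
          (fun t ht => by rw [min_eq_left zero_le_one] at ht; linarith [ht.1])
        convert this.symm using 1 <;> simp
    _ = ∫ t in (0 : ℝ)..1, log |s ^ 2 - t ^ 2| * symmDensity h t := by
        refine intervalIntegral.integral_congr_ae (Eventually.of_forall fun t ht => ?_)
        rw [uIoc_of_le zero_le_one] at ht
        have ht0 : t ≠ 0 := ht.1.ne'
        rw [symmDensity, sqrt_div' _ (sq_nonneg t), sqrt_sq ht.1.le]
        field_simp
    _ = ∫ t in (-1 : ℝ)..1, log |s - t| * symmDensity h t :=
        integral_log_abs_sq_sub_sq_mul (continuous_symmDensity h) (symmDensity_neg h) s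
    _ = ∫ t, log |s - t| * symmDensity h t := by
        refine intervalIntegral.integral_eq_integral_of_support_subset ?_
        exact (Function.support_mul_subset_right _ _).trans
          ((support_symmDensity_subset h).trans Ioo_subset_Ioc_self)

end symmDensity

lemma continuousOn_integral_log_abs_sub_mul_density (h : ℝ[X]) :
    ContinuousOn (fun x => ∫ y in (0 : ℝ)..1,
      log |x - y| * (1 / (2 * π) * √((1 - y) / y) * h.eval y)) (Ici 0) := by
  have hsq : Continuous fun s => ∫ y in (0 : ℝ)..1,
      log |s ^ 2 - y| * (1 / (2 * π) * √((1 - y) / y) * h.eval y) := by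
    simp_rw [integral_log_abs_sq_sub_mul_density]
    exact (hasCompactSupport_symmDensity h).continuous_integral_log_abs_sub_mul
      (continuous_symmDensity h)
  refine (hsq.comp continuous_sqrt).continuousOn.congr fun x hx => ?_
  simp [sq_sqrt (mem_Ici.1 hx)]

lemma eqOn_Icc_and_strictAntiOn_Ici_of_hasDerivAt {f g : ℝ → ℝ} (hf : ContinuousOn f (Ici 0))
    (hf' : ∀ x, 0 < x → HasDerivAt f (-(√((x - 1) / x) * g x)) x) (hg : ∀ x, 1 < x → 0 < g x) :
    (∀ x ∈ Icc (0 : ℝ) 1, f x = f 1) ∧ StrictAntiOn f (Ici 1) := by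
  have hflat : ∀ x ∈ interior (Icc (0 : ℝ) 1), -(√((x - 1) / x) * g x) = 0 := fun x hx => by
    rw [interior_Icc] at hx
    rw [sqrt_eq_zero'.2 (div_nonpos_of_nonpos_of_nonneg (by linarith [hx.2]) hx.1.le)]
    simp
  have hderiv_Icc : ∀ x ∈ interior (Icc (0 : ℝ) 1),
      HasDerivWithinAt f (-(√((x - 1) / x) * g x)) (interior (Icc 0 1)) x :=
    fun x hx => (hf' x (interior_Icc.subset hx).1).hasDerivWithinAt
  have hmono : MonotoneOn f (Icc 0 1) :=
    monotoneOn_of_hasDerivWithinAt_nonneg (convex_Icc 0 1) (hf.mono Icc_subset_Ici_self)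
      hderiv_Icc fun x hx => (hflat x hx).ge
  have hanti : AntitoneOn f (Icc 0 1) :=
    antitoneOn_of_hasDerivWithinAt_nonpos (convex_Icc 0 1) (hf.mono Icc_subset_Ici_self)
      hderiv_Icc fun x hx => (hflat x hx).le
  refine ⟨fun x hx => le_antisymm (hmono hx (right_mem_Icc.2 zero_le_one) hx.2)
    (hanti hx (right_mem_Icc.2 zero_le_one) hx.2), ?_⟩
  refine strictAntiOn_of_hasDerivWithinAt_neg (convex_Ici 1)
    (hf.mono (Ici_subset_Ici.2 zero_le_one))
    (fun x hx => (hf' x (zero_lt_one.trans (interior_Ici.subset hx))).hasDerivWithinAt)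
    fun x hx => ?_
  have hx : 1 < x := interior_Ici.subset hx
  have hsqrt : 0 < √((x - 1) / x) := sqrt_pos.2 (div_pos (by linarith) (by linarith))
  simpa using mul_pos hsqrt (hg x hx)

theorem variational_conditions (h V : Polynomial ℝ)
    (hpos : ∀ x : ℝ, 0 ≤ x → 0 < h.eval x)
    (ψ : ℝ → ℝ)
    (hψ : ∀ y, ψ y = (1 / (2 * Real.pi)) * Real.sqrt ((1 - y) / y) * h.eval y)
    (G : ℝ → ℝ)
    (hG : ∀ x, G x = 2 * (∫ y in (0:ℝ)..1, Real.log |x - y| * ψ y) - V.eval x)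
    (hG' : ∀ x : ℝ, 0 < x → HasDerivAt G
      (-((((x : ℂ) - 1) ^ ((1:ℂ)/2) * (x : ℂ) ^ (-((1:ℂ)/2)) * ((h.eval x : ℝ) : ℂ)).re)) x) :
    StrictAntiOn G (Set.Ioi 1) ∧
    ∃ ℓ : ℝ, (∀ x ∈ Set.Icc (0:ℝ) 1, G x = ℓ) ∧ (∀ x : ℝ, 1 < x → G x < ℓ) := by
  obtain rfl : ψ = fun y => 1 / (2 * π) * √((1 - y) / y) * h.eval y := funext hψ
  have hcont : ContinuousOn G (Ici 0) :=
    ((continuousOn_const.mul (continuousOn_integral_log_abs_sub_mul_density h)).sub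
      V.continuous.continuousOn).congr fun x _ => hG x
  obtain ⟨hconst, hstrict⟩ := eqOn_Icc_and_strictAntiOn_Ici_of_hasDerivAt hcont
    (fun x hx => by simpa only [re_sub_one_cpow_half_mul_cpow_neg_half hx.le] using hG' x hx)
    (fun x hx => hpos x (by linarith))
  exact ⟨hstrict.mono Ioi_subset_Ici_self, G 1, hconst,
    fun x hx => hstrict self_mem_Ici (mem_Ici.2 hx.le) hx⟩
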